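/- Let n ≥ 2, set λ*_k = (binom(2n−1, 2k) · binom(2n−1, 2k+1))^{−1/2} for 0 ≤ k ≤ n−1, and for 0 ≤ k ≤ n−1 define b_k = sqrt( (2n−2k−1)(2n−2k) · (2k)/(2k+1) ) and c_k = sqrt( (2n−2k−2)(2n−2k−1) · (2k+2)/(2k+1) ). Then for every 0 ≤ k ≤ n−2: (λ*_{k+1})^2 · b_{k+1}^2 · c_k^2 ≥ (2k+2)^4 · (λ*_k)^2. -/

import Mathlib

/-- The explicit weight vector `λ*_k = (binom(2n−1,2k) · binom(2n−1,2k+1))^{-1/2}`. -/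
noncomputable def lamStar (n : ℕ) (k : ℕ) : ℝ :=
  (Real.sqrt ((Nat.choose (2*n-1) (2*k) * Nat.choose (2*n-1) (2*k+1) : ℕ)))⁻¹

/-- The auxiliary constant `b_k = sqrt((2n−2k−1)(2n−2k)·(2k)/(2k+1))`. -/
noncomputable def bCoef (n : ℕ) (k : ℕ) : ℝ :=
  Real.sqrt (((2*n : ℝ) - 2*k - 1) * ((2*n : ℝ) - 2*k) * (2*k) / (2*k + 1))

/-- The auxiliary constant `c_k = sqrt((2n−2k−2)(2n−2k−1)·(2k+2)/(2k+1))`. -/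
noncomputable def cCoef (n : ℕ) (k : ℕ) : ℝ :=
  Real.sqrt (((2*n : ℝ) - 2*k - 2) * ((2*n : ℝ) - 2*k - 1) * (2*k + 2) / (2*k + 1))

/-- For `n ≥ 2` and `0 ≤ k ≤ n−2`,
`(λ*_{k+1})² b_{k+1}² c_k² ≥ (2k+2)⁴ (λ*_k)²`. -/
theorem lamStar_ratio_estimate (n : ℕ) (hn : 2 ≤ n) (k : ℕ) (hk : k ≤ n - 2) :
    (2*(k : ℝ) + 2) ^ 4 * (lamStar n k) ^ 2
      ≤ (lamStar n (k+1)) ^ 2 * (bCoef n (k+1)) ^ 2 * (cCoef n k) ^ 2 := by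
  have hkn : k + 2 ≤ n := by omega
  have hknR : (k:ℝ) + 2 ≤ n := by exact_mod_cast hkn
  -- real recurrences for binomial coefficients
  have r1 : ((Nat.choose (2*n-1) (2*k+1) : ℝ)) * (2*k+1)
      = (Nat.choose (2*n-1) (2*k) : ℝ) * (2*n - 2*k - 1) := by
    have h := congrArg (Nat.cast : ℕ → ℝ) (Nat.choose_succ_right_eq (2*n-1) (2*k))
    push_cast [Nat.cast_sub (show 2*k ≤ 2*n-1 by omega),
      Nat.cast_sub (show 1 ≤ 2*n by omega)] at h
    linarith [h]
  have r2 : ((Nat.choose (2*n-1) (2*k+2) : ℝ)) * (2*k+2)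
      = (Nat.choose (2*n-1) (2*k+1) : ℝ) * (2*n - 2*k - 2) := by
    have h := congrArg (Nat.cast : ℕ → ℝ) (Nat.choose_succ_right_eq (2*n-1) (2*k+1))
    push_cast [Nat.cast_sub (show 2*k+1 ≤ 2*n-1 by omega),
      Nat.cast_sub (show 1 ≤ 2*n by omega)] at h
    linarith [h]
  have r3 : ((Nat.choose (2*n-1) (2*k+3) : ℝ)) * (2*k+3)
      = (Nat.choose (2*n-1) (2*k+2) : ℝ) * (2*n - 2*k - 3) := by
    have h := congrArg (Nat.cast : ℕ → ℝ) (Nat.choose_succ_right_eq (2*n-1) (2*k+2))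
    push_cast [Nat.cast_sub (show 2*k+2 ≤ 2*n-1 by omega),
      Nat.cast_sub (show 1 ≤ 2*n by omega)] at h
    linarith [h]
  have hApos : (0:ℝ) < (Nat.choose (2*n-1) (2*k) : ℝ) := by
    exact_mod_cast Nat.choose_pos (by omega)
  have hBpos : (0:ℝ) < (Nat.choose (2*n-1) (2*k+1) : ℝ) := by
    exact_mod_cast Nat.choose_pos (by omega)
  have hCpos : (0:ℝ) < (Nat.choose (2*n-1) (2*k+2) : ℝ) := by
    exact_mod_cast Nat.choose_pos (by omega)
  have hDpos : (0:ℝ) < (Nat.choose (2*n-1) (2*k+3) : ℝ) := by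
    exact_mod_cast Nat.choose_pos (by omega)
  -- squares
  have sqL1 : (lamStar n k)^2
      = ((Nat.choose (2*n-1) (2*k) : ℝ) * (Nat.choose (2*n-1) (2*k+1) : ℝ))⁻¹ := by
    rw [lamStar, inv_pow, Real.sq_sqrt (by positivity)]
    push_cast; ring
  have sqL2 : (lamStar n (k+1))^2
      = ((Nat.choose (2*n-1) (2*k+2) : ℝ) * (Nat.choose (2*n-1) (2*k+3) : ℝ))⁻¹ := by
    rw [lamStar, inv_pow, Real.sq_sqrt (by positivity)]
    norm_num [mul_add]
  have sqB : (bCoef n (k+1))^2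
      = ((2*n:ℝ) - 2*(k+1) - 1) * ((2*n:ℝ) - 2*(k+1)) * (2*(k+1)) / (2*(k+1) + 1) := by
    rw [bCoef]
    push_cast
    apply Real.sq_sqrt
    apply div_nonneg _ (by positivity)
    apply mul_nonneg (mul_nonneg (by push_cast; linarith) (by push_cast; linarith)) (by positivity)
  have sqC : (cCoef n k)^2
      = ((2*n:ℝ) - 2*k - 2) * ((2*n:ℝ) - 2*k - 1) * (2*k + 2) / (2*k + 1) := by
    rw [cCoef]
    apply Real.sq_sqrt
    apply div_nonneg _ (by positivity)
    apply mul_nonneg (mul_nonneg (by linarith) (by linarith)) (by positivity)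
  rw [sqL1, sqL2, sqB, sqC]
  apply le_of_eq
  push_cast
  field_simp
  have hA' : (Nat.choose (2*n-1) (2*k) : ℝ) ≠ 0 := ne_of_gt hApos
  have hB' : (Nat.choose (2*n-1) (2*k+1) : ℝ) ≠ 0 := ne_of_gt hBpos
  have hC' : (Nat.choose (2*n-1) (2*k+2) : ℝ) ≠ 0 := ne_of_gt hCpos
  have hD' : (Nat.choose (2*n-1) (2*k+3) : ℝ) ≠ 0 := ne_of_gt hDpos
  have h1 : (2*(k:ℝ)+1) ≠ 0 := by positivity
  have h3 : (2*((k:ℝ)+1)+1) ≠ 0 := by positivity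
  linear_combination
    ((Nat.choose (2*n-1) (2*k+2) : ℝ)) * ((k:ℝ)+1)^2 * (2*(k:ℝ)+1) * r3
    + (2*(n:ℝ)-2*k-3) * (1/4) * (2*(k:ℝ)+1)
        * ((Nat.choose (2*n-1) (2*k+2) : ℝ) * (2*(k:ℝ)+2)
           + (Nat.choose (2*n-1) (2*k+1) : ℝ) * (2*(n:ℝ)-2*k-2)) * r2
    + (1/4) * (2*(n:ℝ)-2*k-3) * (2*(n:ℝ)-2*k-2)^2
        * (Nat.choose (2*n-1) (2*k+1) : ℝ) * r1
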